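/- Let C > 0, λ > 0, and 0 < δ < 1, and put W = V^{1-δ}, so that W → ∞ jointly as V → ∞. Then the double Riemann sum (1/V^δ)(1/W) ∑_{j≥1} e^{-(j/V^δ)C} ∑_{n ∈ ℤ} e^{-πλ²(j/V^δ)(n/W)²} converges, as V → ∞, to ∫_0^∞ e^{-Cζ} ∫_ℝ e^{-πλ²ζξ²} dξ dζ = √π/(λ√C). -/

import Mathlib

open scoped BigOperators
open Filter MeasureTheory Set

private lemma unionIoc {h : ℝ} (hh : 0 < h) (k : ℕ) :
    (⋃ j : ℕ, Set.Ioc (((j : ℝ) + k) * h) (((j : ℝ) + k + 1) * h)) = Set.Ioi ((k : ℝ) * h) := by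
  ext x
  simp only [Set.mem_iUnion, Set.mem_Ioc, Set.mem_Ioi]
  constructor
  · rintro ⟨j, h1, h2⟩
    have hj : (0:ℝ) ≤ (j:ℝ) := Nat.cast_nonneg j
    nlinarith
  · intro hx
    have hxh : (k : ℝ) < x / h := (lt_div_iff₀ hh).mpr (by linarith)
    have hn : k < ⌈x / h⌉₊ := Nat.lt_ceil.mpr hxh
    obtain ⟨m, hm⟩ := Nat.exists_eq_add_of_lt hn
    refine ⟨m, ?_, ?_⟩
    · have h1 : ((k + m : ℕ) : ℝ) < x / h := Nat.lt_ceil.mp (by omega)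
      have := (lt_div_iff₀ hh).mp h1
      push_cast at this ⊢
      nlinarith
    · have h2 : x / h ≤ (⌈x / h⌉₊ : ℝ) := Nat.le_ceil _
      rw [div_le_iff₀ hh, hm] at h2
      push_cast at h2 ⊢
      nlinarith

private lemma pairwiseIoc {a : ℕ → ℝ} (ha : Monotone a) :
    Pairwise (Function.onFun Disjoint fun j => Set.Ioc (a j) (a (j + 1))) := by
  intro i j hij
  rcases lt_or_gt_of_ne hij with h' | h'
  · exact Set.Ioc_disjoint_Ioc.mpr
      (le_trans (min_le_left _ _) ((ha (by omega)).trans (le_max_right _ _)))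
  · exact Set.Ioc_disjoint_Ioc.mpr
      (le_trans (min_le_right _ _) ((ha (by omega)).trans (le_max_left _ _)))

private lemma riemann {g : ℝ → ℝ} (hmono : AntitoneOn g (Set.Ioi 0))
    (hpos : ∀ x : ℝ, 0 < x → 0 ≤ g x) (hint : IntegrableOn g (Set.Ioi 0)) {h : ℝ} (hh : 0 < h) :
    Summable (fun j : ℕ => g (((j : ℝ) + 1) * h)) ∧
    (∫ x in Set.Ioi h, g x) ≤ h * ∑' j : ℕ, g (((j : ℝ) + 1) * h) ∧
    h * ∑' j : ℕ, g (((j : ℝ) + 1) * h) ≤ ∫ x in Set.Ioi 0, g x := by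
  have hmem : ∀ j : ℕ, (0:ℝ) < ((j:ℝ)+1) * h := fun j => by positivity
  set s : ℕ → Set ℝ := fun j => Set.Ioc ((j : ℝ) * h) (((j : ℝ) + 1) * h) with hs
  have hsm : ∀ j, MeasurableSet (s j) := fun j => measurableSet_Ioc
  have hmon0 : Monotone (fun j : ℕ => (j : ℝ) * h) := fun i j hij =>
    mul_le_mul_of_nonneg_right (by exact_mod_cast hij) hh.le
  have hsd : Pairwise (Function.onFun Disjoint s) := by
    have h2 := pairwiseIoc hmon0
    simpa [hs, Function.onFun] using h2
  have hUnion0 : (⋃ j, s j) = Set.Ioi (0:ℝ) := by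
    have := unionIoc hh 0
    simpa [hs] using this
  have hHS : HasSum (fun j => ∫ x in s j, g x) (∫ x in Set.Ioi (0:ℝ), g x) := by
    have := MeasureTheory.hasSum_integral_iUnion hsm hsd (by rw [hUnion0]; exact hint)
    rwa [hUnion0] at this
  have hsub : ∀ j : ℕ, s j ⊆ Set.Ioi (0:ℝ) := by
    intro j x hx
    have : (0:ℝ) ≤ (j:ℝ) * h := by positivity
    exact lt_of_le_of_lt this hx.1
  have hvol : ∀ j : ℕ, (volume (s j)).toReal = h := by
    intro j
    rw [hs]
    simp only [Real.volume_Ioc]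
    rw [show ((j:ℝ)+1)*h - (j:ℝ)*h = h by ring, ENNReal.toReal_ofReal hh.le]
  have hle1 : ∀ j : ℕ, h * g (((j:ℝ)+1)*h) ≤ ∫ x in s j, g x := by
    intro j
    have hconst : ∫ _x in s j, g (((j:ℝ)+1)*h) = h * g (((j:ℝ)+1)*h) := by
      rw [MeasureTheory.setIntegral_const, smul_eq_mul, measureReal_def, hvol j]
    rw [← hconst]
    apply MeasureTheory.setIntegral_mono_on
    · exact (integrableOn_const measure_Ioc_lt_top.ne)
    · exact hint.mono_set (hsub j)
    · exact hsm j
    · intro x hx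
      exact hmono (hsub j hx) (hmem j) hx.2
  set t : ℕ → Set ℝ := fun j => Set.Ioc (((j : ℝ) + 1) * h) (((j : ℝ) + 2) * h) with ht
  have htm : ∀ j, MeasurableSet (t j) := fun j => measurableSet_Ioc
  have htsub : ∀ j : ℕ, t j ⊆ Set.Ioi (0:ℝ) := by
    intro j x hx
    exact lt_trans (hmem j) hx.1
  have hle2 : ∀ j : ℕ, (∫ x in t j, g x) ≤ h * g (((j:ℝ)+1)*h) := by
    intro j
    have hvolt : (volume (t j)).toReal = h := by
      rw [ht]
      simp only [Real.volume_Ioc]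
      rw [show ((j:ℝ)+2)*h - ((j:ℝ)+1)*h = h by ring, ENNReal.toReal_ofReal hh.le]
    have hconst : ∫ _x in t j, g (((j:ℝ)+1)*h) = h * g (((j:ℝ)+1)*h) := by
      rw [MeasureTheory.setIntegral_const, smul_eq_mul, measureReal_def, hvolt]
    rw [← hconst]
    apply MeasureTheory.setIntegral_mono_on
    · exact hint.mono_set (htsub j)
    · exact (integrableOn_const measure_Ioc_lt_top.ne)
    · exact htm j
    · intro x hx
      exact hmono (hmem j) (htsub j hx) hx.1.le
  have htd : Pairwise (Function.onFun Disjoint t) := by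
    have hmon1 : Monotone (fun j : ℕ => ((j : ℝ) + 1) * h) := fun i j hij => by
      have hij' : (i:ℝ) ≤ (j:ℝ) := by exact_mod_cast hij
      exact mul_le_mul_of_nonneg_right (by linarith) hh.le
    have h2 := pairwiseIoc hmon1
    have he : ∀ j : ℕ, (((j+1 : ℕ):ℝ) + 1) * h = ((j:ℝ) + 2) * h := by
      intro j; push_cast; ring
    simp only [Function.onFun, he] at h2
    simpa [ht, Function.onFun] using h2
  have hUnion1 : (⋃ j, t j) = Set.Ioi h := by
    have := unionIoc hh 1
    rw [ht]
    push_cast at this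
    rw [show (1:ℝ) * h = h by ring] at this
    convert this using 3 with j
    ring_nf
  have hHS1 : HasSum (fun j => ∫ x in t j, g x) (∫ x in Set.Ioi h, g x) := by
    have := MeasureTheory.hasSum_integral_iUnion htm htd
      (by rw [hUnion1]; exact hint.mono_set (Set.Ioi_subset_Ioi hh.le))
    rwa [hUnion1] at this
  have hsum_int : Summable (fun j => ∫ x in s j, g x) := hHS.summable
  have hnn : ∀ j : ℕ, 0 ≤ h * g (((j:ℝ)+1)*h) := fun j => mul_nonneg hh.le (hpos _ (hmem j))
  have hsummul : Summable (fun j : ℕ => h * g (((j:ℝ)+1)*h)) :=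
    Summable.of_nonneg_of_le hnn hle1 hsum_int
  have hsumg : Summable (fun j : ℕ => g (((j:ℝ)+1)*h)) := by
    have := hsummul.mul_left h⁻¹
    simpa [← mul_assoc, inv_mul_cancel₀ hh.ne'] using this
  refine ⟨hsumg, ?_, ?_⟩
  · rw [← hHS1.tsum_eq, ← tsum_mul_left]
    exact Summable.tsum_le_tsum hle2 hHS1.summable hsummul
  · rw [← hHS.tsum_eq, ← tsum_mul_left]
    exact Summable.tsum_le_tsum hle1 hsummul hsum_int
private lemma inner_bound {q b : ℝ} (hq : 0 < q) (hb : 0 < b) :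
    Summable (fun n : ℤ => Real.exp (-(q * ((n : ℝ) / b) ^ 2))) ∧
    |b⁻¹ * (∑' n : ℤ, Real.exp (-(q * ((n : ℝ) / b) ^ 2))) - Real.sqrt (Real.pi / q)| ≤ b⁻¹ := by
  have hbinv : (0:ℝ) < b⁻¹ := inv_pos.mpr hb
  set g : ℝ → ℝ := fun x => Real.exp (-(q * x ^ 2)) with hgdef
  have hmono : AntitoneOn g (Set.Ioi 0) := by
    intro x hx y hy hxy
    apply Real.exp_le_exp.mpr
    simp only [neg_le_neg_iff]
    exact mul_le_mul_of_nonneg_left (pow_le_pow_left₀ (le_of_lt hx) hxy 2) hq.le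
  have hposg : ∀ x : ℝ, 0 < x → 0 ≤ g x := fun x _ => (Real.exp_pos _).le
  have hint : IntegrableOn g (Set.Ioi 0) := by
    have := (integrable_exp_neg_mul_sq hq).integrableOn (s := Set.Ioi 0)
    simpa [hgdef, neg_mul] using this
  obtain ⟨hsum, hlow, hup⟩ := riemann hmono hposg hint hbinv
  have hI : (∫ x in Set.Ioi (0:ℝ), g x) = Real.sqrt (Real.pi / q) / 2 := by
    have := integral_gaussian_Ioi q
    simpa [hgdef, neg_mul] using this
  have hsplit : (∫ x in Set.Ioc (0:ℝ) b⁻¹, g x) + ∫ x in Set.Ioi b⁻¹, g x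
      = ∫ x in Set.Ioi (0:ℝ), g x := by
    rw [← MeasureTheory.setIntegral_union (Set.Ioc_disjoint_Ioi le_rfl) measurableSet_Ioi
      (hint.mono_set Set.Ioc_subset_Ioi_self) (hint.mono_set (Set.Ioi_subset_Ioi hbinv.le)),
      Set.Ioc_union_Ioi_eq_Ioi hbinv.le]
  have hIoc : (∫ x in Set.Ioc (0:ℝ) b⁻¹, g x) ≤ b⁻¹ := by
    have h1 : (∫ x in Set.Ioc (0:ℝ) b⁻¹, g x) ≤ ∫ _x in Set.Ioc (0:ℝ) b⁻¹, (1:ℝ) := by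
      apply MeasureTheory.setIntegral_mono_on
      · exact hint.mono_set Set.Ioc_subset_Ioi_self
      · exact integrableOn_const measure_Ioc_lt_top.ne
      · exact measurableSet_Ioc
      · intro x _
        have : -(q * x ^ 2) ≤ 0 := neg_nonpos.mpr (by positivity)
        simpa [hgdef] using Real.exp_le_one_iff.mpr this
    have h2 : (∫ _x in Set.Ioc (0:ℝ) b⁻¹, (1:ℝ)) = b⁻¹ := by
      rw [MeasureTheory.setIntegral_const, smul_eq_mul, measureReal_def, Real.volume_Ioc,
        ENNReal.toReal_ofReal (by linarith), mul_one, sub_zero]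
    linarith
  -- relate ℤ-sum to ℕ-sums
  set f : ℤ → ℝ := fun n => Real.exp (-(q * ((n : ℝ) / b) ^ 2)) with hfdef
  have harg : ∀ j : ℕ, f ((j:ℤ) + 1) = g (((j:ℝ) + 1) * b⁻¹) := by
    intro j
    simp only [hfdef, hgdef]
    norm_num [div_eq_mul_inv]
  have hargneg : ∀ j : ℕ, f (-((j:ℤ) + 1)) = g (((j:ℝ) + 1) * b⁻¹) := by
    intro j
    simp only [hfdef, hgdef]
    rw [show ((-((j:ℤ)+1) : ℤ) : ℝ) / b = -((((j:ℤ)+1 : ℤ):ℝ) / b) by push_cast; ring, neg_sq]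
    norm_num [div_eq_mul_inv]
  have hsum1 : Summable (fun j : ℕ => f ((j:ℤ) + 1)) := hsum.congr fun j => (harg j).symm
  have hnat : Summable (fun n : ℕ => f (n:ℤ)) := by
    rw [← summable_nat_add_iff 1]
    exact hsum1.congr fun j => by push_cast; ring_nf
  have hneg : Summable (fun n : ℕ => f (-((n:ℤ) + 1))) :=
    hsum.congr fun j => (hargneg j).symm
  have hZ : Summable f := Summable.of_nat_of_neg_add_one hnat hneg
  have htsum : (∑' n : ℤ, f n) = 1 + 2 * ∑' j : ℕ, g (((j:ℝ) + 1) * b⁻¹) := by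
    rw [tsum_of_nat_of_neg_add_one hnat hneg]
    have e0 : (∑' n : ℕ, f (n:ℤ)) = f 0 + ∑' n : ℕ, f ((n:ℤ)+1) := by
      rw [Summable.tsum_eq_zero_add hnat]
      congr 1
    have e1 : (∑' n : ℕ, f ((n:ℤ)+1)) = ∑' j : ℕ, g (((j:ℝ) + 1) * b⁻¹) := tsum_congr harg
    have e2 : (∑' n : ℕ, f (-((n:ℤ)+1))) = ∑' j : ℕ, g (((j:ℝ) + 1) * b⁻¹) := tsum_congr hargneg
    have hf0 : f 0 = 1 := by simp [hfdef]
    rw [e0, e1, e2, hf0]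
    ring
  have hup' : b⁻¹ * (∑' j : ℕ, g (((j:ℝ) + 1) * b⁻¹)) ≤ Real.sqrt (Real.pi / q) / 2 := by
    rw [← hI]; exact hup
  have hlow' : Real.sqrt (Real.pi / q) / 2 - b⁻¹ ≤ b⁻¹ * ∑' j : ℕ, g (((j:ℝ) + 1) * b⁻¹) := by
    have := hlow
    rw [← hsplit] at hI
    linarith
  refine ⟨hZ, ?_⟩
  rw [htsum]
  rw [abs_le]
  constructor <;> nlinarith [hup', hlow']
private noncomputable def Gfun (C lam : ℝ) : ℝ → ℝ := fun ζ =>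
  Real.exp (-(ζ * C)) * Real.sqrt (Real.pi / (Real.pi * lam ^ 2 * ζ))

private lemma Gval {lam : ℝ} (hlam : 0 < lam) {ζ : ℝ} (hζ : 0 < ζ) :
    Real.sqrt (Real.pi / (Real.pi * lam ^ 2 * ζ)) = (lam * Real.sqrt ζ)⁻¹ := by
  have h1 : Real.pi / (Real.pi * lam ^ 2 * ζ) = (lam ^ 2 * ζ)⁻¹ := by
    field_simp
  rw [h1, Real.sqrt_inv, Real.sqrt_mul (sq_nonneg lam) ζ, Real.sqrt_sq hlam.le]

private lemma Gmono {C lam : ℝ} (hC : 0 < C) (hlam : 0 < lam) :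
    AntitoneOn (Gfun C lam) (Set.Ioi 0) := by
  intro x hx y hy hxy
  have hx' : (0:ℝ) < x := hx
  have hy' : (0:ℝ) < y := hy
  simp only [Gfun]
  rw [Gval hlam hx', Gval hlam hy']
  have h1 : Real.exp (-(y * C)) ≤ Real.exp (-(x * C)) :=
    Real.exp_le_exp.mpr (by nlinarith)
  have h2 : (lam * Real.sqrt y)⁻¹ ≤ (lam * Real.sqrt x)⁻¹ := by
    apply inv_anti₀
    · positivity
    · exact mul_le_mul_of_nonneg_left (Real.sqrt_le_sqrt hxy) hlam.le
  exact mul_le_mul h1 h2 (by positivity) (Real.exp_pos _).le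

private lemma Gnonneg (C lam : ℝ) : ∀ x : ℝ, 0 < x → 0 ≤ Gfun C lam x := fun x _ => by
  simp only [Gfun]; positivity

private lemma Gint {C lam : ℝ} (hC : 0 < C) (hlam : 0 < lam) :
    IntegrableOn (Gfun C lam) (Set.Ioi 0) := by
  have h0 : IntegrableOn (fun x : ℝ => Real.exp (-x) * x ^ ((1:ℝ)/2 - 1)) (Set.Ioi 0) :=
    Real.GammaIntegral_convergent (by norm_num)
  have h1 : IntegrableOn (fun ζ : ℝ => Real.exp (-(C*ζ)) * (C*ζ) ^ ((1:ℝ)/2 - 1)) (Set.Ioi 0) := by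
    have := (integrableOn_Ioi_comp_mul_left_iff
      (fun x : ℝ => Real.exp (-x) * x ^ ((1:ℝ)/2 - 1)) 0 hC).mpr (by simpa using h0)
    simpa using this
  have h2 : IntegrableOn (fun ζ : ℝ =>
      lam⁻¹ * Real.sqrt C * (Real.exp (-(C*ζ)) * (C*ζ) ^ ((1:ℝ)/2 - 1))) (Set.Ioi 0) :=
    h1.const_mul (lam⁻¹ * Real.sqrt C)
  apply h2.congr_fun ?_ measurableSet_Ioi
  intro ζ hζ
  have hζ' : (0:ℝ) < ζ := hζ
  show lam⁻¹ * Real.sqrt C * (Real.exp (-(C*ζ)) * (C*ζ) ^ ((1:ℝ)/2 - 1)) = Gfun C lam ζ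
  simp only [Gfun]
  rw [Gval hlam hζ']
  rw [show ((1:ℝ)/2 - 1) = -(1/2) by norm_num, Real.rpow_neg (by positivity : (0:ℝ) ≤ C*ζ),
    ← Real.sqrt_eq_rpow, Real.sqrt_mul hC.le, show -(C*ζ) = -(ζ*C) by ring]
  have h1' : Real.sqrt C ≠ 0 := by positivity
  have h2' : Real.sqrt ζ ≠ 0 := by positivity
  field_simp

private lemma Gintegral {C lam : ℝ} (hC : 0 < C) (hlam : 0 < lam) :
    (∫ ζ in Set.Ioi (0:ℝ), Gfun C lam ζ) = Real.sqrt Real.pi / (lam * Real.sqrt C) := by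
  have h2 := integral_comp_rpow_Ioi (Gfun C lam) (p := 2) two_ne_zero
  rw [← h2]
  have hcongr : ∀ x ∈ Set.Ioi (0:ℝ),
      (|(2:ℝ)| * x ^ ((2:ℝ) - 1)) • Gfun C lam (x ^ (2:ℝ)) = (2/lam) * Real.exp (-C * x ^ 2) := by
    intro x hx
    have hx' : (0:ℝ) < x := hx
    have hx2 : x ^ (2:ℝ) = x ^ 2 := by
      rw [show (2:ℝ) = ((2:ℕ):ℝ) by norm_num, Real.rpow_natCast]
    rw [hx2]
    simp only [Gfun]
    rw [Gval hlam (by positivity), Real.sqrt_sq hx'.le]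
    rw [show ((2:ℝ) - 1) = 1 by norm_num, Real.rpow_one, abs_of_pos (by norm_num : (0:ℝ) < 2)]
    rw [smul_eq_mul, show (-(x^2 * C)) = -C * x^2 by ring]
    have hx0 : x ≠ 0 := hx'.ne'
    field_simp
  rw [MeasureTheory.setIntegral_congr_fun measurableSet_Ioi hcongr,
    MeasureTheory.integral_const_mul, integral_gaussian_Ioi C,
    Real.sqrt_div Real.pi_pos.le]
  have h1' : Real.sqrt C ≠ 0 := by positivity
  field_simp
private lemma main_bounds (C lam δ : ℝ) (hC : 0 < C) (hlam : 0 < lam)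
    (hδ0 : 0 < δ) (hδ1 : δ < 1) {V : ℝ} (hV : 1 < V) :
    Real.sqrt Real.pi / (lam * Real.sqrt C) - 2 * Real.sqrt ((V ^ δ)⁻¹) / lam
        - (V ^ (1-δ))⁻¹ * C⁻¹
      ≤ (1 / V ^ δ) * (1 / V ^ (1 - δ)) *
        ∑' j : ℕ+, Real.exp (-(((j : ℝ) / V ^ δ) * C)) *
          ∑' n : ℤ, Real.exp (-(Real.pi * lam ^ 2 * ((j : ℝ) / V ^ δ) *
            ((n : ℝ) / V ^ (1 - δ)) ^ 2)) ∧
    (1 / V ^ δ) * (1 / V ^ (1 - δ)) *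
        ∑' j : ℕ+, Real.exp (-(((j : ℝ) / V ^ δ) * C)) *
          ∑' n : ℤ, Real.exp (-(Real.pi * lam ^ 2 * ((j : ℝ) / V ^ δ) *
            ((n : ℝ) / V ^ (1 - δ)) ^ 2))
      ≤ Real.sqrt Real.pi / (lam * Real.sqrt C) + (V ^ (1-δ))⁻¹ * C⁻¹ := by
  have hV0 : (0:ℝ) < V := lt_trans one_pos hV
  set a := V ^ δ with ha'
  set b := V ^ (1-δ) with hb'
  have ha : 0 < a := Real.rpow_pos_of_pos hV0 δ
  have hb : 0 < b := Real.rpow_pos_of_pos hV0 _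
  have hh : (0:ℝ) < a⁻¹ := inv_pos.mpr ha
  have hbinv : (0:ℝ) ≤ b⁻¹ := (inv_pos.mpr hb).le
  -- the E function
  have hEmono : AntitoneOn (fun ζ : ℝ => Real.exp (-(ζ * C))) (Set.Ioi 0) := by
    intro x _ y _ hxy
    exact Real.exp_le_exp.mpr (neg_le_neg (mul_le_mul_of_nonneg_right hxy hC.le))
  have hEpos : ∀ x : ℝ, 0 < x → 0 ≤ Real.exp (-(x * C)) := fun x _ => (Real.exp_pos _).le
  have hEint : IntegrableOn (fun ζ : ℝ => Real.exp (-(ζ * C))) (Set.Ioi 0) := by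
    have h1 : IntegrableOn (fun x : ℝ => Real.exp (-x)) (Set.Ioi (0*C)) := by
      simpa [neg_one_mul] using exp_neg_integrableOn_Ioi (0*C) one_pos
    exact (integrableOn_Ioi_comp_mul_right_iff (fun x => Real.exp (-x)) 0 hC).mpr h1
  have hEval : (∫ ζ in Set.Ioi (0:ℝ), Real.exp (-(ζ * C))) = C⁻¹ := by
    have h0 := integral_comp_mul_right_Ioi (fun x => Real.exp (-x)) 0 hC
    simp only [zero_mul, integral_exp_neg_Ioi, neg_zero, Real.exp_zero, smul_eq_mul,
      mul_one] at h0
    exact h0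
  obtain ⟨hEsum, -, hEup⟩ := riemann hEmono hEpos hEint hh
  obtain ⟨hGsum, hGlow, hGup⟩ := riemann (Gmono hC hlam) (Gnonneg C lam) (Gint hC hlam) hh
  -- W
  set W : ℕ → ℝ := fun j => Real.exp (-((((j:ℝ)+1)*a⁻¹) * C)) *
    (b⁻¹ * ∑' n : ℤ, Real.exp (-(Real.pi * lam^2 * (((j:ℝ)+1)*a⁻¹) * ((n:ℝ)/b)^2))) with hW'
  have hζpos : ∀ j : ℕ, (0:ℝ) < ((j:ℝ)+1)*a⁻¹ := fun j => by positivity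
  have hbounds : ∀ j : ℕ,
      Gfun C lam (((j:ℝ)+1)*a⁻¹) - b⁻¹ * Real.exp (-((((j:ℝ)+1)*a⁻¹) * C)) ≤ W j ∧
      W j ≤ Gfun C lam (((j:ℝ)+1)*a⁻¹) + b⁻¹ * Real.exp (-((((j:ℝ)+1)*a⁻¹) * C)) := by
    intro j
    have hq : 0 < Real.pi * lam^2 * (((j:ℝ)+1)*a⁻¹) := by positivity
    obtain ⟨-, habs⟩ := inner_bound hq hb
    rw [abs_le] at habs
    have he : (0:ℝ) ≤ Real.exp (-((((j:ℝ)+1)*a⁻¹) * C)) := (Real.exp_pos _).le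
    simp only [Gfun, hW']
    constructor
    · nlinarith [habs.1, he]
    · nlinarith [habs.2, he]
  have hWnn : ∀ j : ℕ, 0 ≤ W j := fun j => by
    apply mul_nonneg (Real.exp_pos _).le
    exact mul_nonneg (by positivity) (tsum_nonneg fun n => (Real.exp_pos _).le)
  have hUBsum : Summable (fun j : ℕ => Gfun C lam (((j:ℝ)+1)*a⁻¹)
      + b⁻¹ * Real.exp (-((((j:ℝ)+1)*a⁻¹) * C))) := hGsum.add (hEsum.mul_left b⁻¹)
  have hWsum : Summable W := Summable.of_nonneg_of_le hWnn (fun j => (hbounds j).2) hUBsum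
  have hTub : (∑' j, W j) ≤ (∑' j : ℕ, Gfun C lam (((j:ℝ)+1)*a⁻¹))
      + b⁻¹ * ∑' j : ℕ, Real.exp (-((((j:ℝ)+1)*a⁻¹) * C)) := by
    calc (∑' j, W j) ≤ ∑' j : ℕ, (Gfun C lam (((j:ℝ)+1)*a⁻¹)
        + b⁻¹ * Real.exp (-((((j:ℝ)+1)*a⁻¹) * C))) :=
          Summable.tsum_le_tsum (fun j => (hbounds j).2) hWsum hUBsum
      _ = _ := by rw [Summable.tsum_add hGsum (hEsum.mul_left b⁻¹), tsum_mul_left]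
  have hTlb : (∑' j : ℕ, Gfun C lam (((j:ℝ)+1)*a⁻¹))
      - b⁻¹ * (∑' j : ℕ, Real.exp (-((((j:ℝ)+1)*a⁻¹) * C))) ≤ ∑' j, W j := by
    calc (∑' j : ℕ, Gfun C lam (((j:ℝ)+1)*a⁻¹))
        - b⁻¹ * (∑' j : ℕ, Real.exp (-((((j:ℝ)+1)*a⁻¹) * C)))
        = ∑' j : ℕ, (Gfun C lam (((j:ℝ)+1)*a⁻¹)
            - b⁻¹ * Real.exp (-((((j:ℝ)+1)*a⁻¹) * C))) := by
          rw [Summable.tsum_sub hGsum (hEsum.mul_left b⁻¹), tsum_mul_left]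
      _ ≤ ∑' j, W j := Summable.tsum_le_tsum (fun j => (hbounds j).1)
          (hGsum.sub (hEsum.mul_left b⁻¹)) hWsum
  -- integral estimates
  have hGIoc : (∫ x in Set.Ioi (0:ℝ), Gfun C lam x) - (∫ x in Set.Ioi a⁻¹, Gfun C lam x)
      ≤ 2 * Real.sqrt a⁻¹ / lam := by
    have hsplit : (∫ x in Set.Ioc (0:ℝ) a⁻¹, Gfun C lam x)
        + (∫ x in Set.Ioi a⁻¹, Gfun C lam x) = ∫ x in Set.Ioi (0:ℝ), Gfun C lam x := by
      rw [← MeasureTheory.setIntegral_union (Set.Ioc_disjoint_Ioi le_rfl) measurableSet_Ioi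
        ((Gint hC hlam).mono_set Set.Ioc_subset_Ioi_self)
        ((Gint hC hlam).mono_set (Set.Ioi_subset_Ioi hh.le)),
        Set.Ioc_union_Ioi_eq_Ioi hh.le]
    have hrint : IntervalIntegrable (fun ζ : ℝ => ζ ^ (-(1/2) : ℝ)) volume 0 a⁻¹ :=
      intervalIntegral.intervalIntegrable_rpow' (by norm_num)
    have hle : (∫ x in Set.Ioc (0:ℝ) a⁻¹, Gfun C lam x)
        ≤ ∫ ζ in Set.Ioc (0:ℝ) a⁻¹, lam⁻¹ * ζ ^ (-(1/2) : ℝ) := by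
      apply MeasureTheory.setIntegral_mono_on
      · exact (Gint hC hlam).mono_set Set.Ioc_subset_Ioi_self
      · exact hrint.1.const_mul lam⁻¹
      · exact measurableSet_Ioc
      · intro ζ hζ
        have hζ' : (0:ℝ) < ζ := hζ.1
        simp only [Gfun]
        rw [Gval hlam hζ']
        have e1 : (lam * Real.sqrt ζ)⁻¹ = lam⁻¹ * ζ ^ (-(1/2) : ℝ) := by
          rw [Real.rpow_neg hζ'.le, ← Real.sqrt_eq_rpow, mul_inv]
        rw [← e1]
        exact mul_le_of_le_one_left (by positivity) (Real.exp_le_one_iff.mpr (by nlinarith))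
    have hval : (∫ ζ in Set.Ioc (0:ℝ) a⁻¹, lam⁻¹ * ζ ^ (-(1/2) : ℝ))
        = 2 * Real.sqrt a⁻¹ / lam := by
      rw [← intervalIntegral.integral_of_le hh.le, intervalIntegral.integral_const_mul,
        integral_rpow (Or.inl (by norm_num : (-1:ℝ) < -(1/2)))]
      rw [show (-(1/2) + 1 : ℝ) = 1/2 by norm_num, Real.zero_rpow (by norm_num : (1/2:ℝ) ≠ 0),
        ← Real.sqrt_eq_rpow]
      field_simp
      ring
    linarith
  have hGupI : a⁻¹ * (∑' j : ℕ, Gfun C lam (((j:ℝ)+1)*a⁻¹))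
      ≤ Real.sqrt Real.pi / (lam * Real.sqrt C) := by
    rw [← Gintegral hC hlam]; exact hGup
  have hGlowI : Real.sqrt Real.pi / (lam * Real.sqrt C) - 2 * Real.sqrt a⁻¹ / lam
      ≤ a⁻¹ * ∑' j : ℕ, Gfun C lam (((j:ℝ)+1)*a⁻¹) := by
    have := Gintegral hC hlam
    linarith [hGlow, hGIoc]
  have hEupI : a⁻¹ * (∑' j : ℕ, Real.exp (-((((j:ℝ)+1)*a⁻¹) * C))) ≤ C⁻¹ := by
    rw [← hEval]; exact hEup
  have hEnn : 0 ≤ ∑' j : ℕ, Real.exp (-((((j:ℝ)+1)*a⁻¹) * C)) :=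
    tsum_nonneg fun j => (Real.exp_pos _).le
  -- rewrite the sum
  have hSeq : (1 / a) * (1 / b) *
      (∑' j : ℕ+, Real.exp (-(((j : ℝ) / a) * C)) *
        ∑' n : ℤ, Real.exp (-(Real.pi * lam ^ 2 * ((j : ℝ) / a) * ((n : ℝ) / b) ^ 2)))
      = a⁻¹ * ∑' j, W j := by
    rw [← Equiv.tsum_eq (Equiv.pnatEquivNat.symm) (fun j : ℕ+ =>
      Real.exp (-(((j : ℝ) / a) * C)) *
        ∑' n : ℤ, Real.exp (-(Real.pi * lam ^ 2 * ((j : ℝ) / a) * ((n : ℝ) / b) ^ 2)))]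
    have hterm : ∀ n : ℕ, b⁻¹ * (Real.exp (-((((Equiv.pnatEquivNat.symm n : ℕ+) : ℝ) / a) * C)) *
        ∑' m : ℤ, Real.exp (-(Real.pi * lam ^ 2 * (((Equiv.pnatEquivNat.symm n : ℕ+) : ℝ) / a)
          * ((m : ℝ) / b) ^ 2))) = W n := by
      intro n
      have hcoe : ((Equiv.pnatEquivNat.symm n : ℕ+) : ℝ) = (n:ℝ) + 1 := by
        simp [Equiv.pnatEquivNat]
      rw [hcoe, div_eq_mul_inv ((n:ℝ)+1) a]
      simp only [hW']
      ring
    calc (1 / a) * (1 / b) * ∑' n : ℕ, (Real.exp (-((((Equiv.pnatEquivNat.symm n : ℕ+) : ℝ) / a) * C)) *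
          ∑' m : ℤ, Real.exp (-(Real.pi * lam ^ 2 * (((Equiv.pnatEquivNat.symm n : ℕ+) : ℝ) / a)
            * ((m : ℝ) / b) ^ 2)))
        = a⁻¹ * ∑' n : ℕ, b⁻¹ * (Real.exp (-((((Equiv.pnatEquivNat.symm n : ℕ+) : ℝ) / a) * C)) *
          ∑' m : ℤ, Real.exp (-(Real.pi * lam ^ 2 * (((Equiv.pnatEquivNat.symm n : ℕ+) : ℝ) / a)
            * ((m : ℝ) / b) ^ 2))) := by
          rw [tsum_mul_left, one_div, one_div]
          ring
      _ = a⁻¹ * ∑' j, W j := by rw [tsum_congr hterm]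
  rw [hSeq]
  constructor
  · have k1 : a⁻¹ * ((∑' j : ℕ, Gfun C lam (((j:ℝ)+1)*a⁻¹))
        - b⁻¹ * ∑' j : ℕ, Real.exp (-((((j:ℝ)+1)*a⁻¹) * C))) ≤ a⁻¹ * ∑' j, W j :=
      mul_le_mul_of_nonneg_left hTlb hh.le
    have k2 : b⁻¹ * (a⁻¹ * ∑' j : ℕ, Real.exp (-((((j:ℝ)+1)*a⁻¹) * C))) ≤ b⁻¹ * C⁻¹ :=
      mul_le_mul_of_nonneg_left hEupI hbinv
    have e1 : a⁻¹ * ((∑' j : ℕ, Gfun C lam (((j:ℝ)+1)*a⁻¹))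
        - b⁻¹ * ∑' j : ℕ, Real.exp (-((((j:ℝ)+1)*a⁻¹) * C)))
        = a⁻¹ * (∑' j : ℕ, Gfun C lam (((j:ℝ)+1)*a⁻¹))
          - b⁻¹ * (a⁻¹ * ∑' j : ℕ, Real.exp (-((((j:ℝ)+1)*a⁻¹) * C))) := by ring
    linarith [hGlowI]
  · have k1 : a⁻¹ * ∑' j, W j ≤ a⁻¹ * ((∑' j : ℕ, Gfun C lam (((j:ℝ)+1)*a⁻¹))
        + b⁻¹ * ∑' j : ℕ, Real.exp (-((((j:ℝ)+1)*a⁻¹) * C))) :=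
      mul_le_mul_of_nonneg_left hTub hh.le
    have k2 : b⁻¹ * (a⁻¹ * ∑' j : ℕ, Real.exp (-((((j:ℝ)+1)*a⁻¹) * C))) ≤ b⁻¹ * C⁻¹ :=
      mul_le_mul_of_nonneg_left hEupI hbinv
    have e1 : a⁻¹ * ((∑' j : ℕ, Gfun C lam (((j:ℝ)+1)*a⁻¹))
        + b⁻¹ * ∑' j : ℕ, Real.exp (-((((j:ℝ)+1)*a⁻¹) * C)))
        = a⁻¹ * (∑' j : ℕ, Gfun C lam (((j:ℝ)+1)*a⁻¹))
          + b⁻¹ * (a⁻¹ * ∑' j : ℕ, Real.exp (-((((j:ℝ)+1)*a⁻¹) * C))) := by ring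
    linarith [hGupI]
theorem typeIII_double_riemann_sum (C lam δ : ℝ) (hC : 0 < C) (hlam : 0 < lam)
    (hδ0 : 0 < δ) (hδ1 : δ < 1) :
    Tendsto
      (fun V : ℝ => (1 / V ^ δ) * (1 / V ^ (1 - δ)) *
        ∑' j : ℕ+, Real.exp (-(((j : ℝ) / V ^ δ) * C)) *
          ∑' n : ℤ, Real.exp (-(Real.pi * lam ^ 2 * ((j : ℝ) / V ^ δ) *
            ((n : ℝ) / V ^ (1 - δ)) ^ 2)))
      atTop
      (nhds (∫ ζ in Set.Ioi (0 : ℝ), Real.exp (-C * ζ) *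
        ∫ ξ : ℝ, Real.exp (-(Real.pi * lam ^ 2 * ζ * ξ ^ 2)))) ∧
    (∫ ζ in Set.Ioi (0 : ℝ), Real.exp (-C * ζ) *
        ∫ ξ : ℝ, Real.exp (-(Real.pi * lam ^ 2 * ζ * ξ ^ 2))) =
      Real.sqrt Real.pi / (lam * Real.sqrt C) := by
  have hI2 : (∫ ζ in Set.Ioi (0 : ℝ), Real.exp (-C * ζ) *
      ∫ ξ : ℝ, Real.exp (-(Real.pi * lam ^ 2 * ζ * ξ ^ 2)))
      = Real.sqrt Real.pi / (lam * Real.sqrt C) := by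
    rw [← Gintegral hC hlam]
    apply MeasureTheory.setIntegral_congr_fun measurableSet_Ioi
    intro ζ hζ
    show Real.exp (-C * ζ) * (∫ ξ : ℝ, Real.exp (-(Real.pi * lam ^ 2 * ζ * ξ ^ 2)))
      = Gfun C lam ζ
    have hg : (∫ ξ : ℝ, Real.exp (-(Real.pi * lam ^ 2 * ζ * ξ ^ 2)))
        = Real.sqrt (Real.pi / (Real.pi * lam ^ 2 * ζ)) := by
      rw [← integral_gaussian (Real.pi * lam ^ 2 * ζ)]
      congr 1
      funext ξ
      rw [neg_mul]
    rw [hg]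
    simp only [Gfun]
    congr 2
    ring
  refine ⟨?_, hI2⟩
  rw [hI2]
  set I := Real.sqrt Real.pi / (lam * Real.sqrt C) with hI'
  have hlim1 : Tendsto (fun V : ℝ => (V ^ δ)⁻¹) atTop (nhds 0) :=
    tendsto_inv_atTop_zero.comp (tendsto_rpow_atTop hδ0)
  have hlim2 : Tendsto (fun V : ℝ => (V ^ (1-δ))⁻¹) atTop (nhds 0) :=
    tendsto_inv_atTop_zero.comp (tendsto_rpow_atTop (by linarith))
  have hsqrt : Tendsto (fun V : ℝ => Real.sqrt ((V ^ δ)⁻¹)) atTop (nhds 0) := by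
    have := (Real.continuous_sqrt.tendsto 0).comp hlim1
    simpa only [Function.comp_def, Real.sqrt_zero] using this
  have hlow : Tendsto (fun V : ℝ => I - 2 * Real.sqrt ((V^δ)⁻¹) / lam - (V^(1-δ))⁻¹ * C⁻¹)
      atTop (nhds I) := by
    have h1 : Tendsto (fun V : ℝ => 2 * Real.sqrt ((V^δ)⁻¹) / lam) atTop (nhds 0) := by
      have := (hsqrt.const_mul 2).div_const lam
      simpa using this
    have h2 : Tendsto (fun V : ℝ => (V^(1-δ))⁻¹ * C⁻¹) atTop (nhds 0) := by
      simpa using hlim2.mul_const C⁻¹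
    have h3 := ((tendsto_const_nhds (x := I) (f := (atTop : Filter ℝ))).sub h1).sub h2
    simpa using h3
  have hup : Tendsto (fun V : ℝ => I + (V^(1-δ))⁻¹ * C⁻¹) atTop (nhds I) := by
    have h2 : Tendsto (fun V : ℝ => (V^(1-δ))⁻¹ * C⁻¹) atTop (nhds 0) := by
      simpa using hlim2.mul_const C⁻¹
    have h3 := (tendsto_const_nhds (x := I) (f := (atTop : Filter ℝ))).add h2
    simpa using h3
  apply tendsto_of_tendsto_of_tendsto_of_le_of_le' hlow hup
  · filter_upwards [eventually_gt_atTop (1:ℝ)] with V hV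
    exact (main_bounds C lam δ hC hlam hδ0 hδ1 hV).1
  · filter_upwards [eventually_gt_atTop (1:ℝ)] with V hV
    exact (main_bounds C lam δ hC hlam hδ0 hδ1 hV).2
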